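/- arXiv:1608.03715 — 2 statements merged into one kernel-verified Lean document; each statement's English description precedes it below -/
import Mathlib

section
/- Let G be a finite graph, K a subset of vertices connected to its boundary ∂K, and g : ∂K → ℝ. Then there exists a unique function u : K ∪ ∂K → ℝ with u = g on ∂K and Δ∞u(x) = 0 for all x ∈ K; moreover min_{∂K} g ≤ u ≤ max_{∂K} g on K. -/
open Filter Topology
open scoped Classical

noncomputable section

variable {V : Type*}

/-- A path from `x` to `y` whose interior vertices `l` all lie in `K`. -/
def pathIn (adj : V → V → Prop) (K : Set V) (x y : V) (l : List V) : Prop :=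
  List.Chain adj x (l ++ [y]) ∧ ∀ z ∈ l, z ∈ K

/-- The restricted path metric `d_K` (edge length `δ`), via paths with interior in `K`. -/
def dK (adj : V → V → Prop) (K : Set V) (δ : ℝ) (x y : V) : ℝ :=
  if x = y then 0
  else sInf {r : ℝ | ∃ l : List V, pathIn adj K x y l ∧ r = δ * (l.length + 1)}

/-- The boundary of a vertex set `K`. -/
def bdry (adj : V → V → Prop) (K : Set V) : Set V :=
  {y | y ∉ K ∧ ∃ x ∈ K, adj x y}

/-- The graph infinity Laplacian. -/
def lapInf (adj : V → V → Prop) (u : V → ℝ) (x : V) : ℝ :=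
  sSup ((fun y => u y - u x) '' {y | adj x y}) +
    sInf ((fun y => u y - u x) '' {y | adj x y})

/-- The local Lipschitz constant `F(u,x)` at a vertex `x`. -/
def locLip (adj : V → V → Prop) (δ : ℝ) (u : V → ℝ) (x : V) : ℝ :=
  sSup ((fun y => |u x - u y| / δ) '' {y | adj x y})

/-- The Lipschitz constant of `u` over the set `A`, measured in the metric `d_K`. -/
def LipOn (adj : V → V → Prop) (K A : Set V) (δ : ℝ) (u : V → ℝ) : ℝ :=
  sSup {r : ℝ | ∃ x ∈ A, ∃ y ∈ A, x ≠ y ∧ r = |u x - u y| / dK adj K δ x y}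

/-- `K` is connected: any two points of `K ∪ ∂K` are joined by a path through `K`. -/
def connectedIn (adj : V → V → Prop) (K : Set V) : Prop :=
  ∀ x ∈ K ∪ bdry adj K, ∀ y ∈ K ∪ bdry adj K, x ≠ y → ∃ l, pathIn adj K x y l

/-!
Existence: a function is infinity harmonic at `x` exactly when `u x` is the midrange of its
neighbouring values. Replacing `u` by that midrange on `K` and by `g` on `∂K`, clamped to
`[min g, max g]`, is a monotone self-map of a complete lattice, so it has a fixed point
(Knaster–Tarski), which is the required extension.

Uniqueness: comparison principle. If `u ≤ v` on `∂K` but `u - v` has a positive maximum `M`,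
take, among the maximum points of `u - v`, one where `u` is largest. At such a point both
`u` and `v` are constant on the neighbourhood, so the property spreads along a path to `∂K`,
where `u - v ≤ 0 < M`.
-/

def midrange (adj : V → V → Prop) (u : V → ℝ) (x : V) : ℝ :=
  (sSup (u '' {y | adj x y}) + sInf (u '' {y | adj x y})) / 2

section Neighbours

variable [Finite V] {adj : V → V → Prop} {u v : V → ℝ} {x : V}

lemma lapInf_eq_two_mul (hne : {y | adj x y}.Nonempty) :
    lapInf adj u x = 2 * (midrange adj u x - u x) := by
  have hfin := (Set.toFinite {y | adj x y}).image u
  have himg : (fun y => u y - u x) '' {y | adj x y} =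
      OrderIso.subRight (u x) '' (u '' {y | adj x y}) := by
    rw [Set.image_image]; rfl
  rw [lapInf, midrange, himg, ← (OrderIso.subRight _).map_csSup' (hne.image u) hfin.bddAbove,
    ← (OrderIso.subRight _).map_csInf' (hne.image u) hfin.bddBelow]
  simp only [OrderIso.subRight_apply]
  ring

lemma midrange_mono (h : u ≤ v) : midrange adj u x ≤ midrange adj v x := by
  have hsup : sSup (u '' {y | adj x y}) ≤ sSup (v '' {y | adj x y}) := by
    simp only [sSup_image']
    exact ciSup_mono (Set.finite_range _).bddAbove fun y => h y
  have hinf : sInf (u '' {y | adj x y}) ≤ sInf (v '' {y | adj x y}) := by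
    simp only [sInf_image']
    exact ciInf_mono (Set.finite_range _).bddBelow fun y => h y
  unfold midrange
  linarith

lemma midrange_mem_Icc {m M : ℝ} (hne : {y | adj x y}.Nonempty)
    (h : ∀ y, adj x y → u y ∈ Set.Icc m M) : midrange adj u x ∈ Set.Icc m M := by
  have hfin := (Set.toFinite {y | adj x y}).image u
  have hle : sInf (u '' {y | adj x y}) ≤ sSup (u '' {y | adj x y}) :=
    csInf_le_csSup (hne.image u) hfin.bddBelow hfin.bddAbove
  have hm : m ≤ sInf (u '' {y | adj x y}) :=
    le_csInf (hne.image u) (by rintro _ ⟨y, hy, rfl⟩; exact (h y hy).1)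
  have hM : sSup (u '' {y | adj x y}) ≤ M :=
    csSup_le (hne.image u) (by rintro _ ⟨y, hy, rfl⟩; exact (h y hy).2)
  constructor <;> unfold midrange <;> linarith

lemma sSup_add_sInf_eq_of_lapInf_eq_zero (hne : {y | adj x y}.Nonempty)
    (hu : lapInf adj u x = 0) :
    sSup (u '' {y | adj x y}) + sInf (u '' {y | adj x y}) = 2 * u x := by
  rw [lapInf_eq_two_mul hne, midrange] at hu
  linarith

lemma eq_of_adj_of_lapInf_eq_zero (hne : {y | adj x y}.Nonempty) (hu : lapInf adj u x = 0)
    (hmax : ∀ y, adj x y → u y ≤ u x) {y : V} (hy : adj x y) : u y = u x := by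
  have hfin := (Set.toFinite {y | adj x y}).image u
  have hsum := sSup_add_sInf_eq_of_lapInf_eq_zero hne hu
  have hsup : sSup (u '' {y | adj x y}) ≤ u x :=
    csSup_le (hne.image u) (by rintro _ ⟨z, hz, rfl⟩; exact hmax z hz)
  have hinf : sInf (u '' {y | adj x y}) ≤ u y := csInf_le hfin.bddBelow ⟨y, hy, rfl⟩
  linarith [hmax y hy]

lemma sSup_sub_eq_of_sub_le (hne : {y | adj x y}.Nonempty) (hu : lapInf adj u x = 0)
    (hv : lapInf adj v x = 0) (hmax : ∀ y, adj x y → u y - v y ≤ u x - v x) :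
    sSup (u '' {y | adj x y}) - u x = sSup (v '' {y | adj x y}) - v x := by
  have hfinu := (Set.toFinite {y | adj x y}).image u
  have hfinv := (Set.toFinite {y | adj x y}).image v
  obtain ⟨yu, hyu, hyu_eq⟩ := (hne.image u).csSup_mem hfinu
  obtain ⟨yv, hyv, hyv_eq⟩ := (hne.image v).csInf_mem hfinv
  have hvyu : v yu ≤ sSup (v '' {y | adj x y}) := le_csSup hfinv.bddAbove ⟨yu, hyu, rfl⟩
  have huyv : sInf (u '' {y | adj x y}) ≤ u yv := csInf_le hfinu.bddBelow ⟨yv, hyv, rfl⟩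
  have := sSup_add_sInf_eq_of_lapInf_eq_zero hne hu
  have := sSup_add_sInf_eq_of_lapInf_eq_zero hne hv
  have := hmax yu hyu
  have := hmax yv hyv
  linarith

lemma eq_of_adj_of_sub_le (hne : {y | adj x y}.Nonempty) (hu : lapInf adj u x = 0)
    (hv : lapInf adj v x = 0) (hmax : ∀ y, adj x y → u y - v y ≤ u x - v x)
    (hmax' : ∀ y, adj x y → u y - v y = u x - v x → u y ≤ u x) {y : V} (hy : adj x y) :
    u y = u x ∧ v y = v x := by
  have hfinu := (Set.toFinite {y | adj x y}).image u
  have hfinv := (Set.toFinite {y | adj x y}).image v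
  have hslope := sSup_sub_eq_of_sub_le hne hu hv hmax
  obtain ⟨yu, hyu, hyu_eq⟩ := (hne.image u).csSup_mem hfinu
  have hvyu : v yu ≤ sSup (v '' {y | adj x y}) := le_csSup hfinv.bddAbove ⟨yu, hyu, rfl⟩
  have hsup_u : sSup (u '' {y | adj x y}) ≤ u x := by
    rw [← hyu_eq]
    exact hmax' yu hyu (le_antisymm (hmax yu hyu) (by linarith))
  have hu_const : ∀ z, adj x z → u z = u x := fun z hz =>
    eq_of_adj_of_lapInf_eq_zero hne hu (fun w hw => (le_csSup hfinu.bddAbove ⟨w, hw, rfl⟩).trans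
      hsup_u) hz
  have hsup_v : sSup (v '' {y | adj x y}) ≤ v x := by
    have : sSup (u '' {y | adj x y}) = u x := by rw [← hyu_eq, hu_const yu hyu]
    linarith
  exact ⟨hu_const y hy, eq_of_adj_of_lapInf_eq_zero hne hv (fun w hw =>
    (le_csSup hfinv.bddAbove ⟨w, hw, rfl⟩).trans hsup_v) hy⟩

end Neighbours

variable {adj : V → V → Prop} {K : Set V}

lemma mem_union_bdry_of_adj {x y : V} (hx : x ∈ K) (h : adj x y) : y ∈ K ∪ bdry adj K := by
  by_cases hy : y ∈ K
  · exact Or.inl hy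
  · exact Or.inr ⟨hy, x, hx, h⟩

lemma connectedIn.exists_chain_bdry (hconn : connectedIn adj K) (hbd : (bdry adj K).Nonempty)
    {x : V} (hx : x ∈ K) : ∃ b ∈ bdry adj K, ∃ l, List.IsChain adj (x :: (l ++ [b])) := by
  obtain ⟨b, hb⟩ := hbd
  obtain ⟨l, hl, -⟩ := hconn x (Or.inl hx) b (Or.inr hb) fun h => hb.1 (h ▸ hx)
  exact ⟨b, hb, l, hl⟩

lemma List.IsChain.nonempty_adj_of_append_singleton {x b : V} {l : List V}
    (h : List.IsChain adj (x :: (l ++ [b]))) : {y | adj x y}.Nonempty := by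
  obtain ⟨y, t, ht⟩ := List.exists_cons_of_ne_nil (List.concat_ne_nil b l)
  rw [ht] at h
  exact ⟨y, (List.isChain_cons_cons.1 h).1⟩

theorem le_of_le_on_bdry [Finite V] {u v : V → ℝ}
    (hreach : ∀ x ∈ K, ∃ b ∈ bdry adj K, ∃ l, List.IsChain adj (x :: (l ++ [b])))
    (hu : ∀ x ∈ K, lapInf adj u x = 0) (hv : ∀ x ∈ K, lapInf adj v x = 0)
    (hb : ∀ x ∈ bdry adj K, u x ≤ v x) : ∀ x ∈ K ∪ bdry adj K, u x ≤ v x := by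
  set A := K ∪ bdry adj K
  by_contra! ⟨x₁, hx₁, hlt⟩
  obtain ⟨z, hzA, hzmax⟩ := A.exists_max_image (fun x => u x - v x) A.toFinite ⟨x₁, hx₁⟩
  set M := u z - v z
  have hMpos : 0 < M := by linarith [hzmax x₁ hx₁]
  set S := {x ∈ A | u x - v x = M}
  obtain ⟨x₀, hx₀S, hx₀max⟩ := S.exists_max_image u S.toFinite ⟨z, hzA, rfl⟩
  have mem_K : ∀ x ∈ S, x ∈ K := fun x hx =>
    hx.1.resolve_right fun hxb => by linarith [hb x hxb, hx.2]
  have carries : ∀ ⦃x y⦄, adj x y → x ∈ S ∧ u x = u x₀ → y ∈ S ∧ u y = u x₀ := by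
    rintro x y hxy ⟨⟨hxA, hxM⟩, hxu⟩
    have hxK := mem_K x ⟨hxA, hxM⟩
    have hA : ∀ y, adj x y → y ∈ A := fun y h => mem_union_bdry_of_adj hxK h
    obtain ⟨b, -, l, hl⟩ := hreach x hxK
    obtain ⟨huy, hvy⟩ := eq_of_adj_of_sub_le hl.nonempty_adj_of_append_singleton
      (hu x hxK) (hv x hxK) (fun y h => hxM ▸ hzmax y (hA y h))
      (fun y h hyM => hxu ▸ hx₀max y ⟨hA y h, hyM.trans hxM⟩) hxy
    exact ⟨⟨hA y hxy, by rw [huy, hvy, hxM]⟩, huy.trans hxu⟩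
  obtain ⟨b, hbK, l, hl⟩ := hreach x₀ (mem_K x₀ hx₀S)
  have hbS := (List.IsChain.cons_induction _ _ hl carries ⟨hx₀S, rfl⟩ b (by simp)).1
  linarith [hb b hbK, hbS.2]

def midrangeStep (adj : V → V → Prop) (K : Set V) (g : V → ℝ) {m M : ℝ} (h : m ≤ M)
    (f : V → Set.Icc m M) : V → Set.Icc m M := fun x =>
  Set.projIcc m M h (if x ∈ K then midrange adj (fun y => (f y : ℝ)) x else g x)

lemma monotone_midrangeStep [Finite V] (g : V → ℝ) {m M : ℝ} (h : m ≤ M) :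
    Monotone (midrangeStep adj K g h) := by
  intro f f' hff' x
  apply Set.monotone_projIcc
  split_ifs
  · exact midrange_mono fun y => hff' y
  · exact le_rfl

theorem exists_lapInf_eq_zero [Finite V] {g : V → ℝ} {m M : ℝ} (hmM : m ≤ M)
    (hg : ∀ x ∈ bdry adj K, g x ∈ Set.Icc m M) (hne : ∀ x ∈ K, {y | adj x y}.Nonempty) :
    ∃ u : V → ℝ, (∀ x ∈ bdry adj K, u x = g x) ∧ (∀ x ∈ K, lapInf adj u x = 0) ∧
      ∀ x, u x ∈ Set.Icc m M := by
  have := Fact.mk hmM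
  let T : (V → Set.Icc m M) →o (V → Set.Icc m M) :=
    ⟨midrangeStep adj K g hmM, monotone_midrangeStep g hmM⟩
  set f := T.lfp
  have hfix : ∀ x, midrangeStep adj K g hmM f x = f x := congrFun T.map_lfp
  refine ⟨fun x => f x, fun x hx => ?_, fun x hx => ?_, fun x => (f x).2⟩
  · show (f x : ℝ) = g x
    rw [← hfix x, midrangeStep, if_neg hx.1, Set.projIcc_of_mem hmM (hg x hx)]
  · have hmid := midrange_mem_Icc (hne x hx) fun y _ => (f y).2
    have : (f x : ℝ) = midrange adj (fun y => (f y : ℝ)) x := by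
      rw [← hfix x, midrangeStep, if_pos hx, Set.projIcc_of_mem hmM hmid]
    rw [lapInf_eq_two_mul (hne x hx), ← this, sub_self, mul_zero]

theorem stmt1_general [Fintype V] (adj : V → V → Prop)
    (K : Set V) (hbd : (bdry adj K).Nonempty)
    (hconn : connectedIn adj K) (g : V → ℝ) :
    ∃ u : V → ℝ,
      (∀ x ∈ bdry adj K, u x = g x) ∧
      (∀ x ∈ K, lapInf adj u x = 0) ∧
      (∀ x ∈ K, sInf (g '' bdry adj K) ≤ u x ∧ u x ≤ sSup (g '' bdry adj K)) ∧
      (∀ v : V → ℝ, (∀ x ∈ bdry adj K, v x = g x) → (∀ x ∈ K, lapInf adj v x = 0) →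
        ∀ x ∈ K ∪ bdry adj K, v x = u x) := by
  have hreach := fun x (hx : x ∈ K) => hconn.exists_chain_bdry hbd hx
  have hne : ∀ x ∈ K, {y | adj x y}.Nonempty := fun x hx => by
    obtain ⟨_, -, _, hl⟩ := hreach x hx
    exact hl.nonempty_adj_of_append_singleton
  have hgfin := (bdry adj K).toFinite.image g
  have hg : ∀ x ∈ bdry adj K,
      g x ∈ Set.Icc (sInf (g '' bdry adj K)) (sSup (g '' bdry adj K)) := fun x hx =>
    ⟨csInf_le hgfin.bddBelow ⟨x, hx, rfl⟩, le_csSup hgfin.bddAbove ⟨x, hx, rfl⟩⟩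
  obtain ⟨b, hb⟩ := hbd
  obtain ⟨u, hub, huK, huIcc⟩ := exists_lapInf_eq_zero ((hg b hb).1.trans (hg b hb).2) hg hne
  refine ⟨u, hub, huK, fun x _ => huIcc x, fun v hvb hvK x hx => le_antisymm ?_ ?_⟩
  · exact le_of_le_on_bdry hreach hvK huK (fun y hy => ((hvb y hy).trans (hub y hy).symm).le) x hx
  · exact le_of_le_on_bdry hreach huK hvK (fun y hy => ((hub y hy).trans (hvb y hy).symm).le) x hx

/-- Existence, uniqueness and boundary bounds for the infinity harmonic extension. -/
theorem stmt1 [Fintype V] (adj : V → V → Prop) (hsymm : ∀ x y, adj x y → adj y x)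
    (K : Set V) (hK : K.Nonempty) (hbd : (bdry adj K).Nonempty)
    (hconn : connectedIn adj K) (g : V → ℝ) :
    ∃ u : V → ℝ,
      (∀ x ∈ bdry adj K, u x = g x) ∧
      (∀ x ∈ K, lapInf adj u x = 0) ∧
      (∀ x ∈ K, sInf (g '' bdry adj K) ≤ u x ∧ u x ≤ sSup (g '' bdry adj K)) ∧
      (∀ v : V → ℝ, (∀ x ∈ bdry adj K, v x = g x) → (∀ x ∈ K, lapInf adj v x = 0) →
        ∀ x ∈ K ∪ bdry adj K, v x = u x) :=
  stmt1_general adj K hbd hconn g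
end
end

section
/- Let K be a connected subset of a finite graph with uniform edge length δ and restricted path metric d_K, and let u : K ∪ ∂K → ℝ satisfy Lip(u, K) = Lip(u, ∂K), where Lip(u,K) = max_{x≠y ∈ K∪∂K} |u(x)−u(y)|/d_K(x,y) and Lip(u,∂K) = max_{x≠y ∈ ∂K} |u(x)−u(y)|/d_K(x,y). Suppose x, y ∈ ∂K realize Lip(u,∂K) = |u(x)−u(y)|/d_K(x,y), and γ = {x = x₀, x₁, …, x_N = y} is a minimal path for d_K joining x to y. Then u is linear along γ: u(x_i) = (d_K(x_i,x)·u(y) + d_K(x_i,y)·u(x))/d_K(x,y) for all i. -/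
open Filter Topology
open scoped Classical

noncomputable section

variable {V : Type*}

/-!
Every vertex `z` of a geodesic from `x` to `y` satisfies `d_K(x,z) + d_K(z,y) = d_K(x,y)`.
With `L = |u x - u y| / d_K(x,y)`, the hypothesis makes `u` `L`-Lipschitz on `K ∪ ∂K`, so the
two bounds `|u x - u z| ≤ L d_K(x,z)` and `|u z - u y| ≤ L d_K(z,y)` add up to an equality and
must both be attained; this pins `u z` to the linear interpolation between `u x` and `u y`.
-/

variable {adj : V → V → Prop} {K : Set V} {δ : ℝ}

lemma pathIn_iff {x y : V} {l : List V} :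
    pathIn adj K x y l ↔ (x :: (l ++ [y])).IsChain adj ∧ ∀ z ∈ l, z ∈ K :=
  Iff.rfl

lemma pathIn_append_cons_iff {x y z : V} {l₁ l₂ : List V} :
    pathIn adj K x y (l₁ ++ z :: l₂) ↔
      pathIn adj K x z l₁ ∧ z ∈ K ∧ pathIn adj K z y l₂ := by
  rw [pathIn_iff, pathIn_iff, pathIn_iff, List.append_assoc, List.cons_append,
    List.isChain_cons_split]
  simp only [List.mem_append, List.mem_cons]
  grind

lemma pathIn.reverse (hsymm : ∀ x y, adj x y → adj y x) {x y : V} {l : List V}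
    (h : pathIn adj K x y l) : pathIn adj K y x l.reverse := by
  rw [pathIn_iff] at h ⊢
  refine ⟨?_, fun z hz => h.2 z (List.mem_reverse.mp hz)⟩
  simpa using List.isChain_reverse.mpr (h.1.imp fun a b => hsymm a b)

lemma dK_self (x : V) : dK adj K δ x x = 0 := if_pos rfl

lemma dK_comm (hsymm : ∀ x y, adj x y → adj y x) (x y : V) :
    dK adj K δ x y = dK adj K δ y x := by
  rcases eq_or_ne x y with rfl | h
  · rfl
  · rw [dK, dK, if_neg h, if_neg h.symm]
    congr 1
    ext r
    constructor <;>
    · rintro ⟨l, hp, rfl⟩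
      exact ⟨l.reverse, hp.reverse hsymm, by simp⟩

lemma dK_le_of_pathIn (hδ : 0 ≤ δ) {x y : V} {l : List V} (h : pathIn adj K x y l) :
    dK adj K δ x y ≤ δ * (l.length + 1) := by
  rcases eq_or_ne x y with rfl | hne
  · rw [dK_self]; positivity
  · rw [dK, if_neg hne]
    exact csInf_le ⟨0, by rintro r ⟨l', -, rfl⟩; positivity⟩ ⟨l, h, rfl⟩

lemma le_dK_of_forall_pathIn {x y : V} (hne : x ≠ y) (hex : ∃ l, pathIn adj K x y l) {c : ℝ}
    (h : ∀ l, pathIn adj K x y l → c ≤ δ * (l.length + 1)) : c ≤ dK adj K δ x y := by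
  rw [dK, if_neg hne]
  obtain ⟨l, hl⟩ := hex
  exact le_csInf ⟨_, l, hl, rfl⟩ (by rintro r ⟨l', hl', rfl⟩; exact h l' hl')

lemma dK_pos (hδ : 0 < δ) {x y : V} (hne : x ≠ y) (hex : ∃ l, pathIn adj K x y l) :
    0 < dK adj K δ x y :=
  hδ.trans_le <| le_dK_of_forall_pathIn hne hex fun l _ =>
    le_mul_of_one_le_right hδ.le (by simp)

lemma dK_le_dK_add_dK (hδ : 0 ≤ δ) {x y z : V} (hz : z ∈ K)
    (hxz : ∃ l, pathIn adj K x z l) (hzy : ∃ l, pathIn adj K z y l) :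
    dK adj K δ x y ≤ dK adj K δ x z + dK adj K δ z y := by
  rcases eq_or_ne x z with rfl | hxz'
  · rw [dK_self, zero_add]
  rcases eq_or_ne z y with rfl | hzy'
  · rw [dK_self, add_zero]
  have hconcat : ∀ l₁ l₂, pathIn adj K x z l₁ → pathIn adj K z y l₂ →
      dK adj K δ x y ≤ δ * (l₁.length + 1) + δ * (l₂.length + 1) := fun l₁ l₂ h₁ h₂ => by
    have := dK_le_of_pathIn hδ (pathIn_append_cons_iff.mpr ⟨h₁, hz, h₂⟩)
    simp only [List.length_append, List.length_cons, Nat.cast_add, Nat.cast_one] at this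
    linarith
  have hleft : ∀ l₂, pathIn adj K z y l₂ →
      dK adj K δ x y - δ * (l₂.length + 1) ≤ dK adj K δ x z := fun l₂ h₂ =>
    le_dK_of_forall_pathIn hxz' hxz fun l₁ h₁ => by linarith [hconcat l₁ l₂ h₁ h₂]
  have hright : dK adj K δ x y - dK adj K δ x z ≤ dK adj K δ z y :=
    le_dK_of_forall_pathIn hzy' hzy fun l₂ h₂ => by linarith [hleft l₂ h₂]
  linarith

lemma dK_add_dK_of_mem_geodesic (hδ : 0 ≤ δ) {x y z : V} {l : List V}
    (hl : pathIn adj K x y l) (hmin : δ * (l.length + 1) = dK adj K δ x y)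
    (hz : z ∈ x :: (l ++ [y])) :
    dK adj K δ x z + dK adj K δ z y = dK adj K δ x y := by
  simp only [List.mem_cons, List.mem_append, List.not_mem_nil, or_false] at hz
  rcases hz with rfl | hz | rfl
  · rw [dK_self, zero_add]
  · obtain ⟨l₁, l₂, rfl⟩ := List.append_of_mem hz
    obtain ⟨h₁, hzK, h₂⟩ := pathIn_append_cons_iff.mp hl
    have hsum := add_le_add (dK_le_of_pathIn hδ h₁) (dK_le_of_pathIn hδ h₂)
    have htri := dK_le_dK_add_dK hδ hzK ⟨l₁, h₁⟩ ⟨l₂, h₂⟩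
    simp only [List.length_append, List.length_cons, Nat.cast_add, Nat.cast_one] at hmin
    linarith
  · rw [dK_self, add_zero]

lemma abs_sub_le_LipOn_mul_dK [Finite V] (hδ : 0 < δ) (u : V → ℝ) {A : Set V} {a b : V}
    (ha : a ∈ A) (hb : b ∈ A) (hpath : a ≠ b → ∃ l, pathIn adj K a b l) :
    |u a - u b| ≤ LipOn adj K A δ u * dK adj K δ a b := by
  rcases eq_or_ne a b with rfl | hne
  · simp [dK_self]
  have hbdd : BddAbove {r : ℝ | ∃ x ∈ A, ∃ y ∈ A, x ≠ y ∧ r = |u x - u y| / dK adj K δ x y} :=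
    (Set.finite_range fun p : V × V => |u p.1 - u p.2| / dK adj K δ p.1 p.2).bddAbove.mono
      (by rintro r ⟨x, -, y, -, -, rfl⟩; exact ⟨(x, y), rfl⟩)
  exact (div_le_iff₀ (dK_pos hδ hne (hpath hne))).mp (le_csSup hbdd ⟨a, ha, b, hb, hne, rfl⟩)

lemma eq_div_of_abs_sub_le_of_abs_sub_eq {a b c L s t D : ℝ} (hD : 0 < D) (hst : s + t = D)
    (hac : |a - c| ≤ L * s) (hcb : |c - b| ≤ L * t) (hab : |a - b| = L * D) :
    c = (s * b + t * a) / D := by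
  rw [eq_div_iff hD.ne']
  subst hst
  rcases le_total a b with h | h
  · rw [abs_of_nonpos (sub_nonpos.mpr h)] at hab
    have hc : c - a = L * s := by linarith [neg_abs_le (a - c), neg_abs_le (c - b)]
    linear_combination (s + t) * hc - s * hab
  · rw [abs_of_nonneg (sub_nonneg.mpr h)] at hab
    have hc : a - c = L * s := by linarith [le_abs_self (a - c), le_abs_self (c - b)]
    linear_combination -(s + t) * hc + s * hab

/-- Linearity along a minimal path realizing the maximal boundary slope. -/
theorem stmt4 [Fintype V] (adj : V → V → Prop) (hsymm : ∀ x y, adj x y → adj y x)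
    (δ : ℝ) (hδ : 0 < δ) (K : Set V) (hconn : connectedIn adj K) (u : V → ℝ)
    (hLip : LipOn adj K (K ∪ bdry adj K) δ u = LipOn adj K (bdry adj K) δ u)
    (x y : V) (hx : x ∈ bdry adj K) (hy : y ∈ bdry adj K) (hxy : x ≠ y)
    (hmax : LipOn adj K (bdry adj K) δ u = |u x - u y| / dK adj K δ x y)
    (l : List V) (hl : pathIn adj K x y l)
    (hmin : δ * (l.length + 1) = dK adj K δ x y) :
    ∀ z ∈ x :: (l ++ [y]),
      u z = (dK adj K δ z x * u y + dK adj K δ z y * u x) / dK adj K δ x y := by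
  intro z hz
  have hD : 0 < dK adj K δ x y := dK_pos hδ hxy ⟨l, hl⟩
  have hzA : z ∈ K ∪ bdry adj K := by
    simp only [List.mem_cons, List.mem_append, List.not_mem_nil, or_false] at hz
    rcases hz with rfl | hz | rfl
    exacts [Or.inr hx, Or.inl (hl.2 z hz), Or.inr hy]
  have hbound : ∀ a ∈ K ∪ bdry adj K, ∀ b ∈ K ∪ bdry adj K,
      |u a - u b| ≤ LipOn adj K (bdry adj K) δ u * dK adj K δ a b := fun a ha b hb =>
    hLip ▸ abs_sub_le_LipOn_mul_dK hδ u ha hb (hconn a ha b hb)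
  rw [dK_comm hsymm z x]
  refine eq_div_of_abs_sub_le_of_abs_sub_eq hD (dK_add_dK_of_mem_geodesic hδ.le hl hmin hz)
    (hbound x (Or.inr hx) z hzA) (hbound z hzA y (Or.inr hy)) ?_
  rw [hmax, div_mul_cancel₀ _ hD.ne']
end
end
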